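/- Let f be a positive definite integral binary quadratic form. Then the stabilizer of f in SL₂(ℤ) is a finite group of order 2, 4, or 6. Its order is 4 if and only if f is SL₂(ℤ)-equivalent to a(x² + y²) for some positive integer a, and its order is 6 if and only if f is SL₂(ℤ)-equivalent to a(x² + xy + y²) for some positive integer a; in all other cases the stabilizer is {±I} of order 2. -/

import Mathlib

/-- An integral binary quadratic form `a x² + b x y + c y²`. -/
structure BQF where
  a : ℤ
  b : ℤ
  c : ℤ

namespace BQF

/-- Evaluation of a binary quadratic form. -/
def eval (f : BQF) (x y : ℤ) : ℤ := f.a * x ^ 2 + f.b * x * y + f.c * y ^ 2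

/-- The discriminant `b² − 4ac`. -/
def disc (f : BQF) : ℤ := f.b ^ 2 - 4 * f.a * f.c

/-- Positive definiteness: `a > 0` and negative discriminant. -/
def IsPosDef (f : BQF) : Prop := 0 < f.a ∧ f.disc < 0

/-- The action of `γ = (α β; γ δ) ∈ SL₂(ℤ)` by linear substitution of variables:
`(f·γ)(x, y) = f(αx + βy, γx + δy)`. -/
def act (f : BQF) (γ : Matrix.SpecialLinearGroup (Fin 2) ℤ) : BQF where
  a := f.eval (γ 0 0) (γ 1 0)
  b := 2 * f.a * (γ 0 0) * (γ 0 1) + f.b * ((γ 0 0) * (γ 1 1) + (γ 0 1) * (γ 1 0)) +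
    2 * f.c * (γ 1 0) * (γ 1 1)
  c := f.eval (γ 0 1) (γ 1 1)

end BQF

abbrev SL2 := Matrix.SpecialLinearGroup (Fin 2) ℤ

namespace BQF

lemma det_entries (g : SL2) : g 0 0 * g 1 1 - g 0 1 * g 1 0 = 1 := by
  have := g.2; rwa [Matrix.det_fin_two] at this

lemma act_mul (f : BQF) (g h : SL2) : f.act (g * h) = (f.act g).act h := by
  simp only [act, eval, mk.injEq, Matrix.SpecialLinearGroup.coe_mul]
  simp only [Matrix.mul_apply, Fin.sum_univ_two]
  refine ⟨by ring, by ring, by ring⟩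

lemma act_one (f : BQF) : f.act 1 = f := by
  obtain ⟨a, b, c⟩ := f
  simp only [act, eval]
  norm_num

lemma act_neg (f : BQF) (g : SL2) : f.act (-g) = f.act g := by
  simp only [act, eval, mk.injEq]
  norm_num

lemma disc_act (f : BQF) (g : SL2) : (f.act g).disc = f.disc := by
  have hd := det_entries g
  simp only [act, eval, disc]
  linear_combination (f.b^2 - 4*f.a*f.c) * (1 - g 0 1 * g 1 0 + g 0 0 * g 1 1) * hd

lemma eval_pos (f : BQF) (hf : f.IsPosDef) {x y : ℤ} (h : ¬(x = 0 ∧ y = 0)) :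
    0 < f.eval x y := by
  obtain ⟨ha, hD⟩ := hf
  rw [disc] at hD
  rw [eval]
  rcases eq_or_ne y 0 with hy | hy
  · subst hy
    have hx : x ≠ 0 := fun hx => h ⟨hx, rfl⟩
    have : 0 < x ^ 2 := by positivity
    nlinarith
  · have : 0 < y ^ 2 := by positivity
    nlinarith [sq_nonneg (2*f.a*x + f.b*y)]

lemma isPosDef_act (f : BQF) (hf : f.IsPosDef) (g : SL2) : (f.act g).IsPosDef := by
  constructor
  · have hd := det_entries g
    refine eval_pos f hf ?_
    rintro ⟨h1, h2⟩
    rw [h1, h2] at hd; simp at hd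
  · rw [disc_act]; exact hf.2

end BQF

namespace BQF

/-- The fixed-point form of a matrix. -/
def FM (m : Matrix (Fin 2) (Fin 2) ℤ) : BQF := ⟨m 1 0, m 1 1 - m 0 0, -(m 0 1)⟩

lemma coe_inv (h : SL2) :
    (↑(h⁻¹) : Matrix (Fin 2) (Fin 2) ℤ) = !![h 1 1, -(h 0 1); -(h 1 0), h 0 0] := by
  rw [Matrix.SpecialLinearGroup.coe_inv, Matrix.adjugate_fin_two]

lemma FM_equivariant (m : Matrix (Fin 2) (Fin 2) ℤ) (h : SL2) :
    FM ((↑(h⁻¹) : Matrix (Fin 2) (Fin 2) ℤ) * m * (↑h : Matrix (Fin 2) (Fin 2) ℤ)) =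
      (FM m).act h := by
  rw [coe_inv]
  simp only [FM, act, eval, mk.injEq, Matrix.mul_apply, Fin.sum_univ_two]
  norm_num [Matrix.cons_val_zero, Matrix.cons_val_one]
  refine ⟨by ring, by ring, by ring⟩

lemma act_explicit (f : BQF) (p q r s : ℤ) (hdet : (!![p, q; r, s] : Matrix (Fin 2) (Fin 2) ℤ).det = 1) :
    f.act ⟨!![p, q; r, s], hdet⟩ =
      ⟨f.eval p r, 2*f.a*p*q + f.b*(p*s + q*r) + 2*f.c*r*s, f.eval q s⟩ := by
  simp only [act, eval, mk.injEq]
  norm_num [Matrix.cons_val_zero, Matrix.cons_val_one]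

lemma mk_apply (m : Matrix (Fin 2) (Fin 2) ℤ) (hm : m.det = 1) (i j : Fin 2) :
    ((⟨m, hm⟩ : SL2) : Matrix (Fin 2) (Fin 2) ℤ) i j = m i j := rfl

/-- every positive definite form is equivalent to a reduced one. -/
lemma exists_reduced (f : BQF) (hf : f.IsPosDef) :
    ∃ h : SL2, |(f.act h).b| ≤ (f.act h).a ∧ (f.act h).a ≤ (f.act h).c := by
  obtain ⟨n, hn⟩ : ∃ n : ℕ, f.a ≤ n := ⟨f.a.toNat, Int.self_le_toNat f.a⟩
  induction n generalizing f with
  | zero => exact absurd (lt_of_lt_of_le hf.1 hn) (by norm_num)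
  | succ n IH =>
    have ha0 : 0 < f.a := hf.1
    obtain ⟨a, b, c⟩ := f
    simp only at ha0 hn
    set k : ℤ := -((b + a) / (2 * a)) with hk
    have hTdet : (!![1, k; 0, 1] : Matrix (Fin 2) (Fin 2) ℤ).det = 1 := by
      simp [Matrix.det_fin_two_of]
    have hf1 : BQF.act ⟨a,b,c⟩ ⟨!![1, k; 0, 1], hTdet⟩
        = ⟨a, b + 2*a*k, eval ⟨a,b,c⟩ k 1⟩ := by
      rw [act_explicit]
      simp only [eval, mk.injEq]
      refine ⟨by ring, by ring, trivial⟩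
    have key : b + 2*a*k = (b + a) % (2*a) - a := by
      rw [hk]; linear_combination (-1 : ℤ) * Int.mul_ediv_add_emod (b + a) (2*a)
    have hm1 := Int.emod_nonneg (b + a) (by omega : (2*a) ≠ 0)
    have hm2 := Int.emod_lt_of_pos (b + a) (by omega : 0 < 2*a)
    have hb1 : |b + 2*a*k| ≤ a := by
      rw [abs_le]; constructor <;> linarith
    set f1 := BQF.act ⟨a,b,c⟩ ⟨!![1, k; 0, 1], hTdet⟩ with hf1def
    by_cases hcase : a ≤ f1.c
    · refine ⟨⟨!![1, k; 0, 1], hTdet⟩, ?_, ?_⟩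
      · rw [← hf1def, hf1]; exact hb1
      · rw [← hf1def, hf1]; rw [hf1] at hcase; exact hcase
    · -- swap
      have hSdet : (!![0, -1; 1, 0] : Matrix (Fin 2) (Fin 2) ℤ).det = 1 := by
        simp [Matrix.det_fin_two_of]
      have hposdef1 : f1.IsPosDef := isPosDef_act _ ⟨ha0, hf.2⟩ _
      have hact2 : f1.act ⟨!![0, -1; 1, 0], hSdet⟩ = ⟨f1.c, -f1.b, f1.a⟩ := by
        rw [act_explicit]
        simp only [eval, mk.injEq]
        refine ⟨by ring, by ring, by ring⟩
      have hposdef2 : (f1.act ⟨!![0, -1; 1, 0], hSdet⟩).IsPosDef :=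
        isPosDef_act _ hposdef1 _
      have hlt : (f1.act ⟨!![0, -1; 1, 0], hSdet⟩).a ≤ (n : ℤ) := by
        rw [hact2]
        show f1.c ≤ (n : ℤ)
        push_neg at hcase
        have hn' : a ≤ (n : ℤ) + 1 := by exact_mod_cast hn
        omega
      obtain ⟨h', hh'⟩ := IH (f1.act ⟨!![0, -1; 1, 0], hSdet⟩) hposdef2 hlt
      refine ⟨(show SL2 from ⟨!![1, k; 0, 1], hTdet⟩) * (show SL2 from ⟨!![0, -1; 1, 0], hSdet⟩) * h', ?_⟩
      rwa [act_mul, act_mul, ← hf1def]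

lemma reduced_disc_neg4 (f : BQF) (hpd : f.IsPosDef) (hred : |f.b| ≤ f.a ∧ f.a ≤ f.c)
    (hd : f.disc = -4) : f = ⟨1, 0, 1⟩ := by
  obtain ⟨a, b, c⟩ := f
  obtain ⟨ha, -⟩ := hpd
  simp only [disc] at hd
  obtain ⟨h1, h2⟩ := hred
  simp only at ha h1 h2 hd
  rw [abs_le] at h1
  have hb2 : b^2 ≤ a^2 := by nlinarith
  have ha1 : a = 1 := by nlinarith
  subst ha1
  obtain ⟨hb1, hb2'⟩ := h1
  interval_cases b <;> simp only [mk.injEq] <;> norm_num at hd ⊢ <;> omega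

lemma reduced_disc_neg3 (f : BQF) (hpd : f.IsPosDef) (hred : |f.b| ≤ f.a ∧ f.a ≤ f.c)
    (hd : f.disc = -3) : f = ⟨1, 1, 1⟩ ∨ f = ⟨1, -1, 1⟩ := by
  obtain ⟨a, b, c⟩ := f
  obtain ⟨ha, -⟩ := hpd
  simp only [disc] at hd
  obtain ⟨h1, h2⟩ := hred
  simp only at ha h1 h2 hd
  rw [abs_le] at h1
  have hb2 : b^2 ≤ a^2 := by nlinarith
  have ha1 : a = 1 := by nlinarith
  subst ha1
  obtain ⟨hb1, hb2'⟩ := h1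
  interval_cases b
  · right; simp only [mk.injEq]; norm_num at hd ⊢; omega
  · exfalso; norm_num at hd; omega
  · left; simp only [mk.injEq]; norm_num at hd ⊢; omega

end BQF

namespace BQF

lemma stab_eqs (f : BQF) (g : SL2) (hg : f.act g = f) :
    f.a * (g 0 0)^2 + f.b * (g 0 0) * (g 1 0) + f.c * (g 1 0)^2 = f.a ∧
    2*f.a*(g 0 0)*(g 0 1) + f.b*((g 0 0)*(g 1 1) + (g 0 1)*(g 1 0)) + 2*f.c*(g 1 0)*(g 1 1) = f.b ∧
    f.a * (g 0 1)^2 + f.b * (g 0 1) * (g 1 1) + f.c * (g 1 1)^2 = f.c := by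
  rw [act] at hg
  have h1 := congrArg BQF.a hg
  have h2 := congrArg BQF.b hg
  have h3 := congrArg BQF.c hg
  simp only [eval] at h1 h2 h3
  exact ⟨h1, h2, h3⟩

lemma coe_eq_one_of (g : SL2) (h1 : g 0 0 = 1) (h2 : g 0 1 = 0) (h3 : g 1 0 = 0)
    (h4 : g 1 1 = 1) : (g : Matrix (Fin 2) (Fin 2) ℤ) = 1 := by
  ext i j
  fin_cases i <;> fin_cases j <;> simp [h1, h2, h3, h4, Matrix.one_apply]

lemma coe_eq_neg_one_of (g : SL2) (h1 : g 0 0 = -1) (h2 : g 0 1 = 0) (h3 : g 1 0 = 0)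
    (h4 : g 1 1 = -1) : (g : Matrix (Fin 2) (Fin 2) ℤ) = -1 := by
  ext i j
  fin_cases i <;> fin_cases j <;> simp [h1, h2, h3, h4, Matrix.one_apply]

lemma trace_cases (f : BQF) (hf : f.IsPosDef) (g : SL2) (hg : f.act g = f) :
    ((g : Matrix (Fin 2) (Fin 2) ℤ) = 1 ∨ (g : Matrix (Fin 2) (Fin 2) ℤ) = -1) ∨
      (g 0 0 + g 1 1 = -1 ∨ g 0 0 + g 1 1 = 0 ∨ g 0 0 + g 1 1 = 1) := by
  obtain ⟨e1, e2, e3⟩ := stab_eqs f g hg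
  have hd := det_entries g
  obtain ⟨ha, hD⟩ := hf
  rw [disc] at hD
  set α := g 0 0; set β := g 0 1; set γ := g 1 0; set δ := g 1 1
  have hY : f.a * β + f.c * γ = 0 := by
    have h2 : 2 * (f.a * β + f.c * γ) = 0 := by
      linear_combination δ * e2 - 2 * γ * e3 - (2 * f.a * β + f.b * δ) * hd
    linarith
  have hX : f.a * δ - f.a * α - f.b * γ = 0 := by
    have h2 : 2 * (f.a * δ - f.a * α - f.b * γ) = 0 := by
      linear_combination (-2 : ℤ) * δ * e1 + γ * e2 + (2 * f.a * α + f.b * γ) * hd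
    linarith
  have key : f.a^2 * ((α + δ)^2 - 4) = (f.b^2 - 4*f.a*f.c) * γ^2 := by
    linear_combination 4 * f.a^2 * hd + (f.a * δ - f.a * α + f.b * γ) * hX + 4 * f.a * γ * hY
  rcases eq_or_ne γ 0 with hγ | hγ
  · left
    have hβ : β = 0 := by
      rw [hγ] at hY; simp at hY
      rcases hY with h | h
      · exact absurd h (by omega)
      · exact h
    rw [hγ, hβ] at hd
    simp at hd
    have hδα : f.a * δ = f.a * α := by rw [hγ] at hX; linarith
    have hda : δ = α := by
      have := mul_left_cancel₀ (by omega : f.a ≠ 0) hδα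
      omega
    rcases Int.eq_one_or_neg_one_of_mul_eq_one' (by linarith [hd] : α * δ = 1) with ⟨h1, h2⟩ | ⟨h1, h2⟩
    · exact Or.inl (coe_eq_one_of g h1 hβ hγ h2)
    · exact Or.inr (coe_eq_neg_one_of g h1 hβ hγ h2)
  · right
    have hγ2 : 1 ≤ γ^2 := by
      rcases lt_or_gt_of_ne hγ with h | h <;> nlinarith
    have ha2 : 0 < f.a^2 := by positivity
    have : (α + δ)^2 < 4 := by nlinarith
    have h1 : -1 ≤ α + δ := by nlinarith
    have h2 : α + δ ≤ 1 := by nlinarith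
    omega

end BQF

namespace BQF

lemma neg_apply (g : SL2) (i j : Fin 2) : (-g) i j = -(g i j) := rfl

lemma equivA_core (f : BQF) (hf : f.IsPosDef) (g : SL2) (hg : f.act g = f)
    (ht : g 0 0 + g 1 1 = 0) (hpos : 0 < g 1 0) :
    ∃ (a : ℤ) (γ : SL2), 0 < a ∧ f.act γ = ⟨a, 0, a⟩ := by
  have hd := det_entries g
  have hFpd : (FM ↑g).IsPosDef := by
    constructor
    · exact hpos
    · show (FM ↑g).disc < 0
      have : (FM ↑g).disc = -4 := by
        simp only [FM, disc]
        linear_combination (g 0 0 + g 1 1) * ht - 4 * hd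
      omega
  have hFdisc : (FM ↑g).disc = -4 := by
    simp only [FM, disc]
    linear_combination (g 0 0 + g 1 1) * ht - 4 * hd
  obtain ⟨h, hred⟩ := exists_reduced _ hFpd
  have h4 : (FM ↑g).act h = ⟨1, 0, 1⟩ :=
    reduced_disc_neg4 _ (isPosDef_act _ hFpd h) hred (by rw [disc_act]; exact hFdisc)
  have heq : FM ((↑(h⁻¹) : Matrix (Fin 2) (Fin 2) ℤ) * (↑g : Matrix (Fin 2) (Fin 2) ℤ) *
      (↑h : Matrix (Fin 2) (Fin 2) ℤ)) = ⟨1, 0, 1⟩ := by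
    rw [FM_equivariant]; exact h4
  set g' : SL2 := h⁻¹ * g * h with hg'
  have hcoe : (↑g' : Matrix (Fin 2) (Fin 2) ℤ) = (↑(h⁻¹) : Matrix (Fin 2) (Fin 2) ℤ) *
      (↑g : Matrix (Fin 2) (Fin 2) ℤ) * (↑h : Matrix (Fin 2) (Fin 2) ℤ) := by
    rw [hg']; simp [Matrix.SpecialLinearGroup.coe_mul]
  have hFM : FM (↑g') = ⟨1, 0, 1⟩ := by rw [hcoe]; exact heq
  rw [FM, mk.injEq] at hFM
  obtain ⟨E1, E2, E3⟩ := hFM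
  have h10 : g' 1 0 = 1 := E1
  have h01 : g' 0 1 = -1 := by omega
  have h11 : g' 1 1 = g' 0 0 := by omega
  have dd := det_entries g'
  rw [h10, h01, h11] at dd
  have h00 : g' 0 0 = 0 := mul_self_eq_zero.mp (by linarith)
  rw [h00] at h11
  have hst' : (f.act h).act g' = f.act h := by
    rw [← act_mul, show h * (h⁻¹ * g * h) = g * h by group, act_mul, hg]
  obtain ⟨s1, s2, s3⟩ := stab_eqs _ g' hst'
  simp only [h00, h01, h10, h11] at s1 s2
  have hc : (f.act h).c = (f.act h).a := by linear_combination s1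
  have hb : (f.act h).b = 0 := by
    have h2 : (2:ℤ) * (f.act h).b = 0 := by linear_combination -s2
    omega
  refine ⟨(f.act h).a, h, (isPosDef_act f hf h).1, ?_⟩
  conv_lhs => rw [show f.act h = (⟨(f.act h).a, (f.act h).b, (f.act h).c⟩ : BQF) from rfl]
  rw [hb, hc]

lemma equivA (f : BQF) (hf : f.IsPosDef) (g : SL2) (hg : f.act g = f)
    (ht : g 0 0 + g 1 1 = 0) :
    ∃ (a : ℤ) (γ : SL2), 0 < a ∧ f.act γ = ⟨a, 0, a⟩ := by
  rcases lt_trichotomy (g 1 0) 0 with h | h | h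
  · refine equivA_core f hf (-g) ?_ ?_ ?_
    · rw [act_neg]; exact hg
    · simp only [neg_apply]; omega
    · simp only [neg_apply]; omega
  · exfalso
    have hd := det_entries g
    rw [h] at hd
    have h11 : g 1 1 = -(g 0 0) := by omega
    rw [h11] at hd
    nlinarith [sq_nonneg (g 0 0)]
  · exact equivA_core f hf g hg ht h

lemma equivB_core (f : BQF) (hf : f.IsPosDef) (g : SL2) (hg : f.act g = f)
    (ht : g 0 0 + g 1 1 = 1 ∨ g 0 0 + g 1 1 = -1) (hpos : 0 < g 1 0) :
    ∃ (a : ℤ) (γ : SL2), 0 < a ∧ f.act γ = ⟨a, a, a⟩ := by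
  have hd := det_entries g
  have htt : (g 0 0 + g 1 1)^2 = 1 := by rcases ht with h | h <;> rw [h] <;> ring
  have hFdisc : (FM ↑g).disc = -3 := by
    simp only [FM, disc]
    linear_combination htt - 4 * hd
  have hFpd : (FM ↑g).IsPosDef := ⟨hpos, by rw [hFdisc]; omega⟩
  obtain ⟨h, hred⟩ := exists_reduced _ hFpd
  have h3 := reduced_disc_neg3 _ (isPosDef_act _ hFpd h) hred (by rw [disc_act]; exact hFdisc)
  set g' : SL2 := h⁻¹ * g * h with hg'
  have hcoe : (↑g' : Matrix (Fin 2) (Fin 2) ℤ) = (↑(h⁻¹) : Matrix (Fin 2) (Fin 2) ℤ) *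
      (↑g : Matrix (Fin 2) (Fin 2) ℤ) * (↑h : Matrix (Fin 2) (Fin 2) ℤ) := by
    rw [hg']; simp [Matrix.SpecialLinearGroup.coe_mul]
  have heq : FM (↑g') = (FM ↑g).act h := by
    rw [hcoe]; exact FM_equivariant (↑g : Matrix (Fin 2) (Fin 2) ℤ) h
  have hst' : (f.act h).act g' = f.act h := by
    rw [← act_mul, show h * (h⁻¹ * g * h) = g * h by group, act_mul, hg]
  have hWdet : (!![1, 0; 1, 1] : Matrix (Fin 2) (Fin 2) ℤ).det = 1 := by
    simp [Matrix.det_fin_two_of]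
  have hApos : 0 < (f.act h).a := (isPosDef_act f hf h).1
  rcases h3 with h3 | h3
  · -- FM g' = (1,1,1)
    have hFM : FM (↑g') = ⟨1, 1, 1⟩ := by rw [heq, h3]
    rw [FM, mk.injEq] at hFM
    obtain ⟨E1, E2, E3⟩ := hFM
    have h10 : g' 1 0 = 1 := E1
    have h01 : g' 0 1 = -1 := by omega
    have h11 : g' 1 1 = g' 0 0 + 1 := by omega
    have dd := det_entries g'
    rw [h10, h01, h11] at dd
    have h00 : g' 0 0 * (g' 0 0 + 1) = 0 := by linarith
    obtain ⟨s1, s2, s3⟩ := stab_eqs _ g' hst'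
    simp only [h01, h10, h11] at s1 s2
    rcases mul_eq_zero.mp h00 with h0 | h0
    · simp only [h0] at s1 s2
      have hc : (f.act h).c = (f.act h).a := by linear_combination s1
      have hb : (f.act h).b = (f.act h).a := by
        have h2 : (2:ℤ) * ((f.act h).b - (f.act h).c) = 0 := by linear_combination -s2
        omega
      refine ⟨(f.act h).a, h, hApos, ?_⟩
      conv_lhs => rw [show f.act h = (⟨(f.act h).a, (f.act h).b, (f.act h).c⟩ : BQF) from rfl]
      rw [hb, hc]
    · have h0' : g' 0 0 = -1 := by omega
      simp only [h0'] at s1 s2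
      have hc : (f.act h).c = (f.act h).b := by linear_combination s1
      have hb : (f.act h).b = (f.act h).a := by
        have h2 : (2:ℤ) * ((f.act h).b - (f.act h).a) = 0 := by linear_combination -s2
        omega
      refine ⟨(f.act h).a, h, hApos, ?_⟩
      conv_lhs => rw [show f.act h = (⟨(f.act h).a, (f.act h).b, (f.act h).c⟩ : BQF) from rfl]
      rw [hc, hb]
  · -- FM g' = (1,-1,1) : f.act h = (a,-a,a), twist by W
    have hFM : FM (↑g') = ⟨1, -1, 1⟩ := by rw [heq, h3]
    rw [FM, mk.injEq] at hFM
    obtain ⟨E1, E2, E3⟩ := hFM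
    have h10 : g' 1 0 = 1 := E1
    have h01 : g' 0 1 = -1 := by omega
    have h11 : g' 1 1 = g' 0 0 - 1 := by omega
    have dd := det_entries g'
    rw [h10, h01, h11] at dd
    have h00 : g' 0 0 * (g' 0 0 - 1) = 0 := by linarith
    obtain ⟨s1, s2, s3⟩ := stab_eqs _ g' hst'
    simp only [h01, h10, h11] at s1 s2
    have hshape : (f.act h).c = (f.act h).a ∧ (f.act h).b = -(f.act h).a := by
      rcases mul_eq_zero.mp h00 with h0 | h0
      · simp only [h0] at s1 s2
        have hc : (f.act h).c = (f.act h).a := by linear_combination s1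
        have hb : (f.act h).b = -(f.act h).c := by
          have h2 : (2:ℤ) * ((f.act h).b + (f.act h).c) = 0 := by linear_combination -s2
          omega
        exact ⟨hc, by omega⟩
      · have h0' : g' 0 0 = 1 := by omega
        simp only [h0'] at s1 s2
        have hbc : (f.act h).b = -(f.act h).c := by linear_combination s1
        have hb : (f.act h).b = -(f.act h).a := by
          have h2 : (2:ℤ) * ((f.act h).b + (f.act h).a) = 0 := by linear_combination -s2
          omega
        exact ⟨by omega, hb⟩
    obtain ⟨hc, hb⟩ := hshape
    refine ⟨(f.act h).a, h * (show SL2 from ⟨!![1, 0; 1, 1], hWdet⟩), hApos, ?_⟩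
    rw [act_mul, act_explicit]
    simp only [eval, mk.injEq]
    refine ⟨by linear_combination hb + hc, by linear_combination hb + 2 * hc, by linear_combination hc⟩

lemma equivB (f : BQF) (hf : f.IsPosDef) (g : SL2) (hg : f.act g = f)
    (ht : g 0 0 + g 1 1 = 1 ∨ g 0 0 + g 1 1 = -1) :
    ∃ (a : ℤ) (γ : SL2), 0 < a ∧ f.act γ = ⟨a, a, a⟩ := by
  rcases lt_trichotomy (g 1 0) 0 with h | h | h
  · refine equivB_core f hf (-g) ?_ ?_ ?_
    · rw [act_neg]; exact hg
    · simp only [neg_apply]; omega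
    · simp only [neg_apply]; omega
  · exfalso
    have hd := det_entries g
    rw [h] at hd
    simp at hd
    rcases Int.eq_one_or_neg_one_of_mul_eq_one' hd with ⟨ha, hb⟩ | ⟨ha, hb⟩ <;> omega
  · exact equivB_core f hf g hg ht h

end BQF

namespace BQF

lemma sol4 (x y : ℤ) (h : x^2 + y^2 = 1) :
    (x = 1 ∧ y = 0) ∨ (x = -1 ∧ y = 0) ∨ (x = 0 ∧ y = 1) ∨ (x = 0 ∧ y = -1) := by
  have h1 : -1 ≤ x := by nlinarith [sq_nonneg y]
  have h2 : x ≤ 1 := by nlinarith [sq_nonneg y]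
  have h3 : -1 ≤ y := by nlinarith [sq_nonneg x]
  have h4 : y ≤ 1 := by nlinarith [sq_nonneg x]
  interval_cases x <;> interval_cases y <;> simp_all <;> omega

lemma sol3 (x y : ℤ) (h : x^2 + x*y + y^2 = 1) :
    (x = 1 ∧ y = 0) ∨ (x = -1 ∧ y = 0) ∨ (x = 0 ∧ y = 1) ∨ (x = 0 ∧ y = -1) ∨
    (x = 1 ∧ y = -1) ∨ (x = -1 ∧ y = 1) := by
  have h1 : -1 ≤ x := by nlinarith [sq_nonneg (x + 2*y)]
  have h2 : x ≤ 1 := by nlinarith [sq_nonneg (x + 2*y)]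
  have h3 : -1 ≤ y := by nlinarith [sq_nonneg (2*x + y)]
  have h4 : y ≤ 1 := by nlinarith [sq_nonneg (2*x + y)]
  interval_cases x <;> interval_cases y <;> simp_all <;> omega

lemma mat_eq {p q r s : ℤ} (g : SL2) (h00 : g 0 0 = p) (h01 : g 0 1 = q)
    (h10 : g 1 0 = r) (h11 : g 1 1 = s) :
    (↑g : Matrix (Fin 2) (Fin 2) ℤ) = !![p, q; r, s] := by
  ext i j
  fin_cases i <;> fin_cases j <;>
    simp only [Matrix.cons_val_zero, Matrix.cons_val_one, Matrix.head_cons, Matrix.of_apply,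
      Matrix.cons_val', Matrix.empty_val', Matrix.cons_val_fin_one, Matrix.head_fin_const] <;>
    assumption

lemma mem4 (a : ℤ) (ha : 0 < a) (γ : SL2) (hγ : BQF.act ⟨a, 0, a⟩ γ = ⟨a, 0, a⟩) :
    (↑γ : Matrix (Fin 2) (Fin 2) ℤ) = !![1,0;0,1] ∨ (↑γ : Matrix (Fin 2) (Fin 2) ℤ) = !![-1,0;0,-1] ∨
    (↑γ : Matrix (Fin 2) (Fin 2) ℤ) = !![0,-1;1,0] ∨ (↑γ : Matrix (Fin 2) (Fin 2) ℤ) = !![0,1;-1,0] := by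
  obtain ⟨s1, s2, s3⟩ := stab_eqs _ γ hγ
  simp only at s1 s2 s3
  have hd := det_entries γ
  have ha' : a ≠ 0 := by omega
  have e1 : γ 0 0 ^ 2 + γ 1 0 ^ 2 = 1 :=
    mul_left_cancel₀ ha' (by linear_combination s1)
  have e3 : γ 0 1 ^ 2 + γ 1 1 ^ 2 = 1 :=
    mul_left_cancel₀ ha' (by linear_combination s3)
  have e2 : γ 0 0 * γ 0 1 + γ 1 0 * γ 1 1 = 0 :=
    mul_left_cancel₀ (by omega : (2*a) ≠ 0) (by linear_combination s2)
  rcases sol4 _ _ e1 with ⟨h00, h10⟩ | ⟨h00, h10⟩ | ⟨h00, h10⟩ | ⟨h00, h10⟩ <;>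
    rcases sol4 _ _ e3 with ⟨h01, h11⟩ | ⟨h01, h11⟩ | ⟨h01, h11⟩ | ⟨h01, h11⟩ <;>
    [skip; skip; skip; skip; skip; skip; skip; skip; skip; skip; skip; skip; skip; skip; skip;
      skip] <;>
    first
      | (exfalso; rw [h00, h01, h10, h11] at e2 hd; omega)
      | (left; exact mat_eq γ h00 h01 h10 h11)
      | (right; left; exact mat_eq γ h00 h01 h10 h11)
      | (right; right; left; exact mat_eq γ h00 h01 h10 h11)
      | (right; right; right; exact mat_eq γ h00 h01 h10 h11)

lemma mem6 (a : ℤ) (ha : 0 < a) (γ : SL2) (hγ : BQF.act ⟨a, a, a⟩ γ = ⟨a, a, a⟩) :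
    (↑γ : Matrix (Fin 2) (Fin 2) ℤ) = !![1,0;0,1] ∨ (↑γ : Matrix (Fin 2) (Fin 2) ℤ) = !![-1,0;0,-1] ∨
    (↑γ : Matrix (Fin 2) (Fin 2) ℤ) = !![0,-1;1,1] ∨ (↑γ : Matrix (Fin 2) (Fin 2) ℤ) = !![0,1;-1,-1] ∨
    (↑γ : Matrix (Fin 2) (Fin 2) ℤ) = !![-1,-1;1,0] ∨ (↑γ : Matrix (Fin 2) (Fin 2) ℤ) = !![1,1;-1,0] := by
  obtain ⟨s1, s2, s3⟩ := stab_eqs _ γ hγ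
  simp only at s1 s2 s3
  have hd := det_entries γ
  have ha' : a ≠ 0 := by omega
  have e1 : γ 0 0 ^ 2 + γ 0 0 * γ 1 0 + γ 1 0 ^ 2 = 1 :=
    mul_left_cancel₀ ha' (by linear_combination s1)
  have e3 : γ 0 1 ^ 2 + γ 0 1 * γ 1 1 + γ 1 1 ^ 2 = 1 :=
    mul_left_cancel₀ ha' (by linear_combination s3)
  have e2 : 2 * (γ 0 0 * γ 0 1) + (γ 0 0 * γ 1 1 + γ 0 1 * γ 1 0) + 2 * (γ 1 0 * γ 1 1) = 1 :=
    mul_left_cancel₀ ha' (by linear_combination s2)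
  rcases sol3 _ _ e1 with ⟨h00, h10⟩ | ⟨h00, h10⟩ | ⟨h00, h10⟩ | ⟨h00, h10⟩ | ⟨h00, h10⟩ | ⟨h00, h10⟩ <;>
    rcases sol3 _ _ e3 with ⟨h01, h11⟩ | ⟨h01, h11⟩ | ⟨h01, h11⟩ | ⟨h01, h11⟩ | ⟨h01, h11⟩ | ⟨h01, h11⟩ <;>
    first
      | (exfalso; rw [h00, h01, h10, h11] at e2 hd; omega)
      | (left; exact mat_eq γ h00 h01 h10 h11)
      | (right; left; exact mat_eq γ h00 h01 h10 h11)
      | (right; right; left; exact mat_eq γ h00 h01 h10 h11)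
      | (right; right; right; left; exact mat_eq γ h00 h01 h10 h11)
      | (right; right; right; right; left; exact mat_eq γ h00 h01 h10 h11)
      | (right; right; right; right; right; exact mat_eq γ h00 h01 h10 h11)

end BQF

namespace BQF

def E1 : SL2 := ⟨!![1,0;0,1], by norm_num [Matrix.det_fin_two_of]⟩
def E2 : SL2 := ⟨!![-1,0;0,-1], by norm_num [Matrix.det_fin_two_of]⟩
def E3 : SL2 := ⟨!![0,-1;1,0], by norm_num [Matrix.det_fin_two_of]⟩
def E4 : SL2 := ⟨!![0,1;-1,0], by norm_num [Matrix.det_fin_two_of]⟩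
def F3 : SL2 := ⟨!![0,-1;1,1], by norm_num [Matrix.det_fin_two_of]⟩
def F4 : SL2 := ⟨!![0,1;-1,-1], by norm_num [Matrix.det_fin_two_of]⟩
def F5 : SL2 := ⟨!![-1,-1;1,0], by norm_num [Matrix.det_fin_two_of]⟩
def F6 : SL2 := ⟨!![1,1;-1,0], by norm_num [Matrix.det_fin_two_of]⟩

lemma SL2_ne (g1 g2 : SL2) (i j : Fin 2) (h : g1 i j ≠ g2 i j) : g1 ≠ g2 :=
  fun he => h (by rw [he])

lemma stabset4 (a : ℤ) (ha : 0 < a) :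
    {γ : SL2 | BQF.act ⟨a, 0, a⟩ γ = ⟨a, 0, a⟩} = {E1, E2, E3, E4} := by
  ext γ
  simp only [Set.mem_setOf_eq, Set.mem_insert_iff, Set.mem_singleton_iff]
  constructor
  · intro h
    rcases mem4 a ha γ h with h | h | h | h
    · exact Or.inl (Subtype.ext h)
    · exact Or.inr (Or.inl (Subtype.ext h))
    · exact Or.inr (Or.inr (Or.inl (Subtype.ext h)))
    · exact Or.inr (Or.inr (Or.inr (Subtype.ext h)))
  · rintro (rfl | rfl | rfl | rfl) <;>
      (rw [show (⟨a, 0, a⟩ : BQF) = ⟨a, 0, a⟩ from rfl]) <;>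
      simp only [E1, E2, E3, E4] <;> rw [act_explicit] <;>
      simp only [eval, mk.injEq] <;> norm_num

lemma stabset6 (a : ℤ) (ha : 0 < a) :
    {γ : SL2 | BQF.act ⟨a, a, a⟩ γ = ⟨a, a, a⟩} = {E1, E2, F3, F4, F5, F6} := by
  ext γ
  simp only [Set.mem_setOf_eq, Set.mem_insert_iff, Set.mem_singleton_iff]
  constructor
  · intro h
    rcases mem6 a ha γ h with h | h | h | h | h | h
    · exact Or.inl (Subtype.ext h)
    · exact Or.inr (Or.inl (Subtype.ext h))
    · exact Or.inr (Or.inr (Or.inl (Subtype.ext h)))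
    · exact Or.inr (Or.inr (Or.inr (Or.inl (Subtype.ext h))))
    · exact Or.inr (Or.inr (Or.inr (Or.inr (Or.inl (Subtype.ext h)))))
    · exact Or.inr (Or.inr (Or.inr (Or.inr (Or.inr (Subtype.ext h)))))
  · rintro (rfl | rfl | rfl | rfl | rfl | rfl) <;>
      simp only [E1, E2, F3, F4, F5, F6] <;> rw [act_explicit] <;>
      simp only [eval, mk.injEq] <;> constructor <;> norm_num <;> ring

lemma entry_ne : E1 ≠ E2 ∧ E1 ≠ E3 ∧ E1 ≠ E4 ∧ E2 ≠ E3 ∧ E2 ≠ E4 ∧ E3 ≠ E4 ∧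
    E1 ≠ F3 ∧ E1 ≠ F4 ∧ E1 ≠ F5 ∧ E1 ≠ F6 ∧ E2 ≠ F3 ∧ E2 ≠ F4 ∧ E2 ≠ F5 ∧ E2 ≠ F6 ∧
    F3 ≠ F4 ∧ F3 ≠ F5 ∧ F3 ≠ F6 ∧ F4 ≠ F5 ∧ F4 ≠ F6 ∧ F5 ≠ F6 := by
  refine ⟨?_, ?_, ?_, ?_, ?_, ?_, ?_, ?_, ?_, ?_, ?_, ?_, ?_, ?_, ?_, ?_, ?_, ?_, ?_, ?_⟩ <;>
    · intro he
      first
        | (refine absurd (congrArg (fun g : SL2 => g 0 0) he) ?_; norm_num [E1, E2, E3, E4, F3, F4, F5, F6]; done)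
        | (refine absurd (congrArg (fun g : SL2 => g 0 1) he) ?_; norm_num [E1, E2, E3, E4, F3, F4, F5, F6]; done)
        | (refine absurd (congrArg (fun g : SL2 => g 1 0) he) ?_; norm_num [E1, E2, E3, E4, F3, F4, F5, F6]; done)
        | (refine absurd (congrArg (fun g : SL2 => g 1 1) he) ?_; norm_num [E1, E2, E3, E4, F3, F4, F5, F6]; done)

lemma ncard4 : ({E1, E2, E3, E4} : Set SL2).ncard = 4 := by
  obtain ⟨h12, h13, h14, h23, h24, h34, -⟩ := entry_ne
  rw [Set.ncard_insert_of_notMem (by simp [h12, h13, h14]),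
    Set.ncard_insert_of_notMem (by simp [h23, h24]), Set.ncard_pair h34]

lemma ncard6 : ({E1, E2, F3, F4, F5, F6} : Set SL2).ncard = 6 := by
  obtain ⟨h12, -, -, -, -, -, a1, a2, a3, a4, b1, b2, b3, b4, c1, c2, c3, d1, d2, e1⟩ := entry_ne
  rw [Set.ncard_insert_of_notMem (by simp [h12, a1, a2, a3, a4]),
    Set.ncard_insert_of_notMem (by simp [b1, b2, b3, b4]),
    Set.ncard_insert_of_notMem (by simp [c1, c2, c3]),
    Set.ncard_insert_of_notMem (by simp [d1, d2]), Set.ncard_pair e1]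

def conjEquiv (f : BQF) (h : SL2) :
    {γ : SL2 // f.act γ = f} ≃ {γ : SL2 // (f.act h).act γ = f.act h} where
  toFun g := ⟨h⁻¹ * g.1 * h, by
    rw [← act_mul, show h * (h⁻¹ * g.1 * h) = g.1 * h by group, act_mul, g.2]⟩
  invFun g := ⟨h * g.1 * h⁻¹, by
    rw [show h * g.1 * h⁻¹ = (h * g.1) * h⁻¹ by group, act_mul, act_mul, g.2, ← act_mul,
      mul_inv_cancel, act_one]⟩
  left_inv g := by apply Subtype.ext; show h * (h⁻¹ * g.1 * h) * h⁻¹ = g.1; group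
  right_inv g := by apply Subtype.ext; show h⁻¹ * (h * g.1 * h⁻¹) * h = g.1; group

lemma card_stab_act (f : BQF) (h : SL2) :
    Nat.card {γ : SL2 // f.act γ = f} = Nat.card {γ : SL2 // (f.act h).act γ = f.act h} :=
  Nat.card_congr (conjEquiv f h)

lemma card_eq_four (f : BQF) (a : ℤ) (γ0 : SL2) (ha : 0 < a) (hγ0 : f.act γ0 = ⟨a, 0, a⟩) :
    Finite {γ : SL2 // f.act γ = f} ∧ Nat.card {γ : SL2 // f.act γ = f} = 4 := by
  have hset : {γ : SL2 | (f.act γ0).act γ = f.act γ0} = {E1, E2, E3, E4} := by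
    rw [hγ0]; exact stabset4 a ha
  have hfin : ({γ : SL2 | (f.act γ0).act γ = f.act γ0}).Finite := by
    rw [hset]; exact Set.toFinite _
  constructor
  · have : Finite {γ : SL2 // (f.act γ0).act γ = f.act γ0} := hfin.to_subtype
    exact Finite.of_equiv _ (conjEquiv f γ0).symm
  · rw [card_stab_act f γ0]
    calc Nat.card {γ : SL2 // (f.act γ0).act γ = f.act γ0}
        = ({γ : SL2 | (f.act γ0).act γ = f.act γ0}).ncard := Nat.card_coe_set_eq _
      _ = ({E1, E2, E3, E4} : Set SL2).ncard := by rw [hset]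
      _ = 4 := ncard4

end BQF

namespace BQF

lemma card_eq_six (f : BQF) (a : ℤ) (γ0 : SL2) (ha : 0 < a) (hγ0 : f.act γ0 = ⟨a, a, a⟩) :
    Finite {γ : SL2 // f.act γ = f} ∧ Nat.card {γ : SL2 // f.act γ = f} = 6 := by
  have hset : {γ : SL2 | (f.act γ0).act γ = f.act γ0} = {E1, E2, F3, F4, F5, F6} := by
    rw [hγ0]; exact stabset6 a ha
  have hfin : ({γ : SL2 | (f.act γ0).act γ = f.act γ0}).Finite := by
    rw [hset]; exact Set.toFinite _
  constructor
  · have : Finite {γ : SL2 // (f.act γ0).act γ = f.act γ0} := hfin.to_subtype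
    exact Finite.of_equiv _ (conjEquiv f γ0).symm
  · rw [card_stab_act f γ0]
    calc Nat.card {γ : SL2 // (f.act γ0).act γ = f.act γ0}
        = ({γ : SL2 | (f.act γ0).act γ = f.act γ0}).ncard := Nat.card_coe_set_eq _
      _ = ({E1, E2, F3, F4, F5, F6} : Set SL2).ncard := by rw [hset]
      _ = 6 := ncard6

lemma card_eq_two (f : BQF) (hpm : ∀ γ : SL2, f.act γ = f →
      (↑γ : Matrix (Fin 2) (Fin 2) ℤ) = 1 ∨ (↑γ : Matrix (Fin 2) (Fin 2) ℤ) = -1) :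
    Finite {γ : SL2 // f.act γ = f} ∧ Nat.card {γ : SL2 // f.act γ = f} = 2 := by
  have hset : {γ : SL2 | f.act γ = f} = {1, -1} := by
    ext γ
    simp only [Set.mem_setOf_eq, Set.mem_insert_iff, Set.mem_singleton_iff]
    constructor
    · intro h
      rcases hpm γ h with h' | h'
      · exact Or.inl (Subtype.ext (by rw [h']; rfl))
      · exact Or.inr (Subtype.ext (by rw [h']; simp))
    · rintro (rfl | rfl)
      · exact act_one f
      · rw [show (-1 : SL2) = -(1 : SL2) from rfl, act_neg]; exact act_one f
  have hne : (1 : SL2) ≠ -1 := by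
    refine SL2_ne _ _ 0 0 ?_
    rw [show ((1 : SL2)) 0 0 = 1 from rfl, show ((-1 : SL2)) 0 0 = -1 from rfl]
    norm_num
  have hfin : ({γ : SL2 | f.act γ = f}).Finite := by rw [hset]; exact Set.toFinite _
  refine ⟨hfin.to_subtype, ?_⟩
  calc Nat.card {γ : SL2 // f.act γ = f}
      = ({γ : SL2 | f.act γ = f}).ncard := Nat.card_coe_set_eq _
    _ = ({1, -1} : Set SL2).ncard := by rw [hset]
    _ = 2 := Set.ncard_pair hne

end BQF


/-- The stabilizer in `SL₂(ℤ)` of a positive definite integral binary quadratic form is a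
finite group of order 2, 4, or 6; the order is 4 iff the form is equivalent to
`a(x² + y²)` for a positive integer `a`, the order is 6 iff the form is equivalent to
`a(x² + xy + y²)` for a positive integer `a`, and otherwise the stabilizer is `{±1}`. -/
theorem stabilizer_posDef_BQF (f : BQF) (hf : f.IsPosDef) :
    Finite {γ : Matrix.SpecialLinearGroup (Fin 2) ℤ // f.act γ = f} ∧
    Nat.card {γ : Matrix.SpecialLinearGroup (Fin 2) ℤ // f.act γ = f} ∈
      ({2, 4, 6} : Set ℕ) ∧
    (Nat.card {γ : Matrix.SpecialLinearGroup (Fin 2) ℤ // f.act γ = f} = 4 ↔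
      ∃ (a : ℤ) (γ : Matrix.SpecialLinearGroup (Fin 2) ℤ), 0 < a ∧ f.act γ = ⟨a, 0, a⟩) ∧
    (Nat.card {γ : Matrix.SpecialLinearGroup (Fin 2) ℤ // f.act γ = f} = 6 ↔
      ∃ (a : ℤ) (γ : Matrix.SpecialLinearGroup (Fin 2) ℤ), 0 < a ∧ f.act γ = ⟨a, a, a⟩) ∧
    (Nat.card {γ : Matrix.SpecialLinearGroup (Fin 2) ℤ // f.act γ = f} = 2 →
      ∀ γ : Matrix.SpecialLinearGroup (Fin 2) ℤ, f.act γ = f →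
        (γ : Matrix (Fin 2) (Fin 2) ℤ) = 1 ∨ (γ : Matrix (Fin 2) (Fin 2) ℤ) = -1) := by
  
  classical
  by_cases P0 : ∃ g : SL2, f.act g = f ∧ g 0 0 + g 1 1 = 0
  · obtain ⟨g, hg, ht⟩ := P0
    obtain ⟨a, γ0, ha, hE⟩ := BQF.equivA f hf g hg ht
    obtain ⟨hfin, hcard⟩ := BQF.card_eq_four f a γ0 ha hE
    refine ⟨hfin, by rw [hcard]; simp, ⟨fun _ => ⟨a, γ0, ha, hE⟩, fun _ => hcard⟩, ?_, ?_⟩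
    · constructor
      · intro h6; rw [hcard] at h6; omega
      · rintro ⟨a', γ', ha', hE'⟩
        have := (BQF.card_eq_six f a' γ' ha' hE').2
        omega
    · intro h2; rw [hcard] at h2; omega
  · by_cases P1 : ∃ g : SL2, f.act g = f ∧ (g 0 0 + g 1 1 = 1 ∨ g 0 0 + g 1 1 = -1)
    · obtain ⟨g, hg, ht⟩ := P1
      obtain ⟨a, γ0, ha, hE⟩ := BQF.equivB f hf g hg ht
      obtain ⟨hfin, hcard⟩ := BQF.card_eq_six f a γ0 ha hE
      refine ⟨hfin, by rw [hcard]; simp, ?_, ⟨fun _ => ⟨a, γ0, ha, hE⟩, fun _ => hcard⟩, ?_⟩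
      · constructor
        · intro h4; rw [hcard] at h4; omega
        · rintro ⟨a', γ', ha', hE'⟩
          have := (BQF.card_eq_four f a' γ' ha' hE').2
          omega
      · intro h2; rw [hcard] at h2; omega
    · have hpm : ∀ γ : SL2, f.act γ = f →
          (↑γ : Matrix (Fin 2) (Fin 2) ℤ) = 1 ∨ (↑γ : Matrix (Fin 2) (Fin 2) ℤ) = -1 := by
        intro γ hγ
        rcases BQF.trace_cases f hf γ hγ with h | h
        · exact h
        · rcases h with h | h | h
          · exact absurd ⟨γ, hγ, Or.inr h⟩ P1
          · exact absurd ⟨γ, hγ, h⟩ P0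
          · exact absurd ⟨γ, hγ, Or.inl h⟩ P1
      obtain ⟨hfin, hcard⟩ := BQF.card_eq_two f hpm
      refine ⟨hfin, by rw [hcard]; simp, ?_, ?_, fun _ => hpm⟩
      · constructor
        · intro h4; rw [hcard] at h4; omega
        · rintro ⟨a', γ', ha', hE'⟩
          have := (BQF.card_eq_four f a' γ' ha' hE').2
          omega
      · constructor
        · intro h6; rw [hcard] at h6; omega
        · rintro ⟨a', γ', ha', hE'⟩
          have := (BQF.card_eq_six f a' γ' ha' hE').2
          omega
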